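/- arXiv:2011.06911 — 4 statements merged into one kernel-verified Lean document; each statement's English description precedes it below -/
import Mathlib

section
/- Let E be a finite-dimensional complex inner product space (inner product conjugate-linear in the first slot), H : E → E a linear map, and ψ_0, …, ψ_{m-1} an orthonormal family in E whose span V satisfies H(V) ⊆ V. Let φ_0 ∈ V and define D_{jk} = ⟨ψ_j, H ψ_k⟩ and α_j(t) = ⟨ψ_j, exp((-i t)·H) φ_0⟩ for t ∈ ℝ. Then (a) exp((-i t)·H) φ_0 = ∑_j α_j(t) ψ_j for all t, and (b) each α_j is differentiable with α_j'(t) = -i ∑_k D_{jk} α_k(t). -/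
/-!
The span `V` of the `ψⱼ` is a closed (finite-dimensional) subspace invariant under every
`(-i t) • H`. The operators preserving a closed subspace form a closed subalgebra, which is
therefore stable under the exponential series; so `e^{-iHt} φ₀` stays in `V` and is the sum of
its orthonormal coordinates `αⱼ(t)`. Differentiating `⟪ψⱼ, e^{-iHt} φ₀⟫` gives
`-i ⟪ψⱼ, H e^{-iHt} φ₀⟫`, and expanding `e^{-iHt} φ₀` in the `ψₖ` turns this into
`-i ∑ₖ Dⱼₖ αₖ(t)`.
-/

open scoped InnerProductSpace

section

variable {𝕜 E : Type*} [RCLike 𝕜] [NormedAddCommGroup E] [NormedSpace 𝕜 E]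

def Submodule.stabilizerSubalgebra (V : Submodule 𝕜 E) : Subalgebra 𝕜 (E →L[𝕜] E) where
  carrier := {A | ∀ v ∈ V, A v ∈ V}
  mul_mem' hA hB v hv := hA _ (hB v hv)
  add_mem' hA hB v hv := V.add_mem (hA v hv) (hB v hv)
  algebraMap_mem' c _ hv := V.smul_mem c hv

theorem Submodule.isClosed_stabilizerSubalgebra {V : Submodule 𝕜 E} (hV : IsClosed (V : Set E)) :
    IsClosed (V.stabilizerSubalgebra : Set (E →L[𝕜] E)) := by
  change IsClosed {A : E →L[𝕜] E | ∀ v ∈ V, A v ∈ V}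
  simp_rw [Set.ofPred_forall]
  exact isClosed_biInter fun v _ => hV.preimage (ContinuousLinearMap.apply 𝕜 E v).continuous

theorem NormedSpace.exp_apply_mem_of_mapsTo {V : Submodule 𝕜 E} (hV : IsClosed (V : Set E))
    {A : E →L[𝕜] E} (hA : ∀ v ∈ V, A v ∈ V) {x : E} (hx : x ∈ V) : exp A x ∈ V := by
  have hexp : exp A ∈ V.stabilizerSubalgebra := by
    rw [exp_eq_tsum 𝕜]
    exact tsum_mem (Submodule.isClosed_stabilizerSubalgebra hV) fun n =>
      Subalgebra.smul_mem _ (Subalgebra.pow_mem _ (show A ∈ V.stabilizerSubalgebra from hA) n) _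
  exact hexp x hx

end

theorem hasDerivAt_exp_mul_smul_apply {E : Type*} [NormedAddCommGroup E] [NormedSpace ℂ E]
    [CompleteSpace E] (A : E →L[ℂ] E) (c : ℂ) (x : E) (t : ℝ) :
    HasDerivAt (fun s : ℝ => NormedSpace.exp ((c * s) • A) x)
      (c • A (NormedSpace.exp ((c * t) • A) x)) t := by
  have hline : HasDerivAt (fun s : ℝ => c * (s : ℂ)) c t := by
    simpa using (Complex.ofRealCLM.hasDerivAt (x := t)).const_mul c
  have hexp := (hasDerivAt_exp_smul_const' (𝕂 := ℂ) A (c * t)).scomp t hline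
  exact ((ContinuousLinearMap.apply ℂ E x).restrictScalars ℝ).hasFDerivAt.comp_hasDerivAt t hexp

theorem Orthonormal.sum_inner_smul_eq_of_mem_span {𝕜 E ι : Type*} [RCLike 𝕜]
    [SeminormedAddCommGroup E] [InnerProductSpace 𝕜 E] [Fintype ι] {v : ι → E}
    (hv : Orthonormal 𝕜 v) {x : E} (hx : x ∈ Submodule.span 𝕜 (Set.range v)) :
    ∑ i, ⟪v i, x⟫_𝕜 • v i = x := by
  obtain ⟨c, rfl⟩ := (Submodule.mem_span_range_iff_exists_fun 𝕜).mp hx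
  simp only [hv.inner_right_fintype]

/-- If the span of an orthonormal family `ψ` is invariant under `H`, the coordinates
`αⱼ(t) = ⟪ψⱼ, e^{-iHt} φ₀⟫` of the exact Schrödinger evolution of `φ₀` satisfy
(a) `e^{-iHt} φ₀ = ∑ⱼ αⱼ(t) ψⱼ` and (b) the QAS equation `αⱼ' = -i ∑ₖ Dⱼₖ αₖ`. -/
theorem stmt8 {E : Type*} [NormedAddCommGroup E] [InnerProductSpace ℂ E]
    [FiniteDimensional ℂ E] {m : ℕ}
    (H : E →ₗ[ℂ] E) (ψ : Fin m → E) (hortho : Orthonormal ℂ ψ)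
    (hinv : ∀ v ∈ Submodule.span ℂ (Set.range ψ), H v ∈ Submodule.span ℂ (Set.range ψ))
    (φ0 : E) (hφ0 : φ0 ∈ Submodule.span ℂ (Set.range ψ))
    (D : Matrix (Fin m) (Fin m) ℂ) (hD : ∀ j k, D j k = ⟪ψ j, H (ψ k)⟫_ℂ)
    (α : Fin m → ℝ → ℂ)
    (hα : ∀ j t, α j t = ⟪ψ j, (NormedSpace.exp (((-Complex.I) * (t : ℂ)) •
        (LinearMap.toContinuousLinearMap H))) φ0⟫_ℂ) :
    (∀ t : ℝ, (NormedSpace.exp (((-Complex.I) * (t : ℂ)) •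
        (LinearMap.toContinuousLinearMap H))) φ0 = ∑ j, α j t • ψ j) ∧
    (∀ j (t : ℝ), HasDerivAt (α j) ((-Complex.I) * ∑ k, D j k * α k t) t) := by
  set V := Submodule.span ℂ (Set.range ψ)
  set A := LinearMap.toContinuousLinearMap H
  have hexpand (t : ℝ) :
      NormedSpace.exp ((-Complex.I * t) • A) φ0 = ∑ j, α j t • ψ j := by
    have hmem : NormedSpace.exp ((-Complex.I * t) • A) φ0 ∈ V :=
      NormedSpace.exp_apply_mem_of_mapsTo V.closed_of_finiteDimensional
        (fun v hv => V.smul_mem _ (hinv v hv)) hφ0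
    simp only [hα]
    exact (hortho.sum_inner_smul_eq_of_mem_span hmem).symm
  refine ⟨hexpand, fun j t => ?_⟩
  have hcoord : HasDerivAt (α j)
      ⟪ψ j, -Complex.I • A (NormedSpace.exp ((-Complex.I * t) • A) φ0)⟫_ℂ t := by
    rw [funext (hα j)]
    exact ((innerSL ℂ (ψ j)).restrictScalars ℝ).hasFDerivAt.comp_hasDerivAt t
      (hasDerivAt_exp_mul_smul_apply A (-Complex.I) φ0 t)
  convert hcoord using 1
  rw [inner_smul_right, hexpand, map_sum, inner_sum]
  simp only [map_smul, A, LinearMap.coe_toContinuousLinearMap', inner_smul_right, hD,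
    mul_comm (α _ t)]
end

section
/- Let E be a finite-dimensional complex inner product space (inner product conjugate-linear in the first slot), H : E → E a self-adjoint linear map (⟨Hx, y⟩ = ⟨x, Hy⟩ for all x, y), and ψ : ℝ → E continuously differentiable with ψ'(τ) = -(H ψ(τ) - ⟨ψ(τ), H ψ(τ)⟩ · ψ(τ)) for all τ. If ‖ψ(0)‖ = 1, then ‖ψ(τ)‖ = 1 for all τ ∈ ℝ. -/
open scoped InnerProductSpace

/-!
Writing `a = Re ⟪ψ, H ψ⟫`, the defect `u = ‖ψ‖² - 1` solves the scalar linear equation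
`u' = 2 a u`, because `Re ⟪ψ, ⟪ψ, H ψ⟫ ψ⟫ = a ‖ψ‖²`. Hence `u(τ) = exp (∫₀^τ 2a) · u(0)`, and
`u(0) = 0` forces `u ≡ 0`. Finite dimensionality makes `H`, hence `a`, continuous, which the
integrating factor needs.
-/

theorem eq_exp_integral_smul_of_hasDerivAt {F : Type*} [NormedAddCommGroup F]
    [NormedSpace ℝ F] {f : ℝ → F} {g : ℝ → ℝ} (hg : Continuous g)
    (hf : ∀ t, HasDerivAt f (g t • f t) t) (t : ℝ) :
    f t = Real.exp (∫ s in (0 : ℝ)..t, g s) • f 0 := by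
  set A : ℝ → ℝ := fun t => ∫ s in (0 : ℝ)..t, g s
  have hA : ∀ t, HasDerivAt A (g t) t := fun t => (hg.integral_hasStrictDerivAt 0 t).hasDerivAt
  have hconst : ∀ t, HasDerivAt (fun t => Real.exp (-A t) • f t) 0 t := fun t =>
    (((hA t).neg.exp).smul (hf t)).congr_deriv <| by
      rw [smul_smul, ← add_smul, mul_neg, add_neg_cancel, zero_smul]
  have h := is_const_of_deriv_eq_zero (fun t => (hconst t).differentiableAt)
    (fun t => (hconst t).deriv) t 0
  simp only [A, intervalIntegral.integral_same, neg_zero, Real.exp_zero, one_smul] at h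
  rw [← h, smul_smul, ← Real.exp_add, add_neg_cancel, Real.exp_zero, one_smul]

section ImaginaryTimeEvolution

variable {E : Type*} [NormedAddCommGroup E] [InnerProductSpace ℂ E]

theorem re_inner_neg_sub_inner_smul (T : E →ₗ[ℂ] E) (x : E) :
    (⟪x, -(T x - ⟪x, T x⟫_ℂ • x)⟫_ℂ).re = (⟪x, T x⟫_ℂ).re * (‖x‖ ^ 2 - 1) := by
  rw [inner_neg_right, inner_sub_right, inner_smul_right, inner_self_eq_norm_sq_to_K]
  simp only [Complex.coe_algebraMap, ← Complex.ofReal_pow, Complex.neg_re, Complex.sub_re,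
    Complex.re_mul_ofReal]
  ring

theorem norm_sq_sub_one_eq_exp_integral_mul {T : E →ₗ[ℂ] E} (hT : Continuous T) {ψ : ℝ → E}
    (hψ : ∀ τ, HasDerivAt ψ (-(T (ψ τ) - ⟪ψ τ, T (ψ τ)⟫_ℂ • ψ τ)) τ) (τ : ℝ) :
    ‖ψ τ‖ ^ 2 - 1 =
      Real.exp (∫ s in (0 : ℝ)..τ, 2 * (⟪ψ s, T (ψ s)⟫_ℂ).re) * (‖ψ 0‖ ^ 2 - 1) := by
  let _ := InnerProductSpace.rclikeToReal ℂ E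
  have hψ_cont : Continuous ψ := continuous_iff_continuousAt.2 fun τ => (hψ τ).continuousAt
  refine eq_exp_integral_smul_of_hasDerivAt (f := fun τ => ‖ψ τ‖ ^ 2 - 1) (by fun_prop)
    (fun τ => ((hψ τ).norm_sq.sub_const 1).congr_deriv ?_) τ
  rw [real_inner_eq_re_inner, RCLike.re_to_complex, re_inner_neg_sub_inner_smul, smul_eq_mul,
    mul_assoc]

end ImaginaryTimeEvolution

theorem stmt9_general {E : Type*} [NormedAddCommGroup E] [InnerProductSpace ℂ E]
    [FiniteDimensional ℂ E]
    (H : E →ₗ[ℂ] E)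
    (ψ : ℝ → E)
    (hψ : ∀ τ : ℝ, HasDerivAt ψ (-(H (ψ τ) - ⟪ψ τ, H (ψ τ)⟫_ℂ • ψ τ)) τ)
    (h0 : ‖ψ 0‖ = 1) :
    ∀ τ : ℝ, ‖ψ τ‖ = 1 := by
  intro τ
  have h := norm_sq_sub_one_eq_exp_integral_mul H.continuous_of_finiteDimensional hψ τ
  rw [h0, one_pow, sub_self, mul_zero, sub_eq_zero] at h
  exact (pow_eq_one_iff_of_nonneg (norm_nonneg _) two_ne_zero).1 h

/-- Imaginary time evolution `ψ' = -(H - ⟨H⟩)ψ` with self-adjoint `H` preserves the norm: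
if `‖ψ(0)‖ = 1` then `‖ψ(τ)‖ = 1` for all `τ`. -/
theorem stmt9 {E : Type*} [NormedAddCommGroup E] [InnerProductSpace ℂ E]
    [FiniteDimensional ℂ E]
    (H : E →ₗ[ℂ] E) (hH : ∀ x y : E, ⟪H x, y⟫_ℂ = ⟪x, H y⟫_ℂ)
    (ψ : ℝ → E)
    (hψ : ∀ τ : ℝ, HasDerivAt ψ (-(H (ψ τ) - ⟪ψ τ, H (ψ τ)⟫_ℂ • ψ τ)) τ)
    (h0 : ‖ψ 0‖ = 1) :
    ∀ τ : ℝ, ‖ψ τ‖ = 1 :=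
  stmt9_general H ψ hψ h0
end

section
/- Let E and D be Hermitian m×m complex matrices and let α : ℝ → ℂ^m be differentiable such that for every t: α(t)ᴴ E α(t) ≠ 0 and E · α'(t) = -(D · α(t) - ((α(t)ᴴ D α(t)) / (α(t)ᴴ E α(t))) · E · α(t)). Then the function t ↦ α(t)ᴴ E α(t) is constant on ℝ. -/
open Matrix

/-!
Differentiating `αᴴ E α` gives `2 Re (αᴴ E α')` since `E` is Hermitian, and the evolution
equation makes `αᴴ E α' = -αᴴ G` vanish: the coefficient `⟨H⟩` is exactly the one that makes
`G = D α - ⟨H⟩ E α` orthogonal to `α`.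
-/

lemma dotProduct_sub_div_smul_eq_zero {n K : Type*} [Fintype n] [Field K] {w x y : n → K}
    (hy : w ⬝ᵥ y ≠ 0) : w ⬝ᵥ (x - (w ⬝ᵥ x / w ⬝ᵥ y) • y) = 0 := by
  rw [dotProduct_sub, dotProduct_smul, smul_eq_mul, div_mul_cancel₀ _ hy, sub_self]

lemma Matrix.IsHermitian.star_star_dotProduct_mulVec {n R : Type*} [Fintype n] [CommSemiring R]
    [StarRing R] {A : Matrix n n R} (hA : A.IsHermitian) (x y : n → R) :
    star (star x ⬝ᵥ A *ᵥ y) = star y ⬝ᵥ A *ᵥ x := by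
  rw [star_dotProduct, star_star, star_mulVec, ← dotProduct_mulVec, hA.eq]

lemma HasDerivAt.star_dotProduct_mulVec {m n 𝕜 : Type*} [Fintype m] [Fintype n] [RCLike 𝕜]
    (A : Matrix m n 𝕜) {u : ℝ → m → 𝕜} {v : ℝ → n → 𝕜} {u' : m → 𝕜} {v' : n → 𝕜} {t : ℝ}
    (hu : HasDerivAt u u' t) (hv : HasDerivAt v v' t) :
    HasDerivAt (fun s => star (u s) ⬝ᵥ A *ᵥ v s)
      (star u' ⬝ᵥ A *ᵥ v t + star (u t) ⬝ᵥ A *ᵥ v') t := by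
  have hAv : HasDerivAt (fun s => A *ᵥ v s) (A *ᵥ v') t :=
    hasDerivAt_pi.2 fun i => HasDerivAt.fun_sum fun j _ =>
      (hasDerivAt_pi.1 hv j).const_mul (A i j)
  have := HasDerivAt.fun_sum (u := Finset.univ) fun i _ =>
    (hasDerivAt_pi.1 hu i).star.mul (hasDerivAt_pi.1 hAv i)
  simpa only [dotProduct, Pi.mul_apply, Pi.star_apply, Finset.sum_add_distrib] using this

theorem stmt10_general {m : ℕ} (E D : Matrix (Fin m) (Fin m) ℂ)
    (hE : E.IsHermitian)
    (α : ℝ → (Fin m → ℂ)) (hα : Differentiable ℝ α)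
    (hne : ∀ t : ℝ, star (α t) ⬝ᵥ E.mulVec (α t) ≠ 0)
    (heq : ∀ t : ℝ, E.mulVec (deriv α t) =
      -(D.mulVec (α t) - ((star (α t) ⬝ᵥ D.mulVec (α t)) /
        (star (α t) ⬝ᵥ E.mulVec (α t))) • E.mulVec (α t))) :
    ∀ s t : ℝ, star (α s) ⬝ᵥ E.mulVec (α s) = star (α t) ⬝ᵥ E.mulVec (α t) := by
  have hderiv t := (hα t).hasDerivAt.star_dotProduct_mulVec E (hα t).hasDerivAt
  have horth t : star (α t) ⬝ᵥ E *ᵥ deriv α t = 0 := by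
    rw [heq t, dotProduct_neg, dotProduct_sub_div_smul_eq_zero (hne t), neg_zero]
  refine is_const_of_deriv_eq_zero (fun t => (hderiv t).differentiableAt) fun t => ?_
  rw [(hderiv t).deriv, ← hE.star_star_dotProduct_mulVec, horth, star_zero, add_zero]

/-- Imaginary-time QAS evolution `E α' = -(D α - (αᴴDα/αᴴEα) E α)` with Hermitian `E`, `D`
keeps `αᴴ E α` constant. -/
theorem stmt10 {m : ℕ} (E D : Matrix (Fin m) (Fin m) ℂ)
    (hE : E.IsHermitian) (hD : D.IsHermitian)
    (α : ℝ → (Fin m → ℂ)) (hα : Differentiable ℝ α)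
    (hne : ∀ t : ℝ, star (α t) ⬝ᵥ E.mulVec (α t) ≠ 0)
    (heq : ∀ t : ℝ, E.mulVec (deriv α t) =
      -(D.mulVec (α t) - ((star (α t) ⬝ᵥ D.mulVec (α t)) /
        (star (α t) ⬝ᵥ E.mulVec (α t))) • E.mulVec (α t))) :
    ∀ s t : ℝ, star (α s) ⬝ᵥ E.mulVec (α s) = star (α t) ⬝ᵥ E.mulVec (α t) :=
  stmt10_general E D hE α hα hne heq
end

section
/- Let E be a finite-dimensional complex inner product space (inner product conjugate-linear in the first slot), H : E → E a self-adjoint linear map, and ψ : ℝ → E differentiable at a point τ with ψ'(τ) = -(H ψ(τ) - ⟨ψ(τ), H ψ(τ)⟩ · ψ(τ)) and ‖ψ(τ)‖ = 1. Then the function t ↦ Re⟨ψ(t), H ψ(t)⟩ has derivative at τ equal to -2(‖H ψ(τ)‖² - (Re⟨ψ(τ), H ψ(τ)⟩)²), and this derivative is ≤ 0. -/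
/-!
By symmetry of `H`, the derivative of `t ↦ Re⟪ψ t, H ψ t⟫` along `ψ' = v` is `2 Re⟪H ψ, v⟫`.
For `v = -(H ψ - ⟨H⟩ ψ)`, with `⟨H⟩ = ⟪ψ, H ψ⟫` real, this is `-2 (‖H ψ‖² - ⟨H⟩²)`, and
Cauchy–Schwarz gives `⟨H⟩² ≤ ‖ψ‖² ‖H ψ‖² = ‖H ψ‖²`.
-/

open scoped InnerProductSpace

open RCLike

section
variable {𝕜 E : Type*} [RCLike 𝕜] [NormedAddCommGroup E] [InnerProductSpace 𝕜 E]

theorem sq_re_inner_le (x y : E) : re ⟪x, y⟫_𝕜 ^ 2 ≤ ‖x‖ ^ 2 * ‖y‖ ^ 2 := by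
  rw [← mul_pow, ← sq_abs]
  exact pow_le_pow_left₀ (abs_nonneg _)
    ((abs_re_le_norm _).trans (norm_inner_le_norm x y)) 2

namespace LinearMap.IsSymmetric

theorem re_inner_apply_sub_inner_smul {T : E →ₗ[𝕜] E} (hT : T.IsSymmetric) (x : E) :
    re ⟪T x, T x - ⟪x, T x⟫_𝕜 • x⟫_𝕜 = ‖T x‖ ^ 2 - re ⟪x, T x⟫_𝕜 ^ 2 := by
  rw [inner_sub_right, inner_smul_right, hT x x, ← hT.coe_re_inner_self_apply, ← ofReal_mul]
  simp only [map_sub, ofReal_re, inner_self_eq_norm_sq]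
  ring

theorem hasDerivAt_re_inner_self_apply [NormedSpace ℝ E] [IsScalarTower ℝ 𝕜 E]
    {T : E →L[𝕜] E} (hT : (T : E →ₗ[𝕜] E).IsSymmetric)
    {ψ : ℝ → E} {v : E} {τ : ℝ} (hψ : HasDerivAt ψ v τ) :
    HasDerivAt (fun t => re ⟪ψ t, T (ψ t)⟫_𝕜) (2 * re ⟪T (ψ τ), v⟫_𝕜) τ := by
  have hTψ : HasDerivAt (fun t => T (ψ t)) (T v) τ :=
    (T.restrictScalars ℝ).hasFDerivAt.comp_hasDerivAt τ hψ
  refine (reCLM.hasFDerivAt.comp_hasDerivAt τ (hψ.inner 𝕜 hTψ)).congr_deriv ?_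
  rw [reCLM_apply, map_add, ← hT.apply_clm, inner_re_symm v]
  ring

end LinearMap.IsSymmetric
end

/-- Along imaginary time evolution `ψ' = -(H - ⟨H⟩)ψ` on a normalized state, the energy
`Re⟪ψ, Hψ⟫` has derivative `-2(‖Hψ‖² - (Re⟪ψ, Hψ⟫)²)`, which is nonpositive. -/
theorem stmt11 {E : Type*} [NormedAddCommGroup E] [InnerProductSpace ℂ E]
    [FiniteDimensional ℂ E]
    (H : E →ₗ[ℂ] E) (hH : ∀ x y : E, ⟪H x, y⟫_ℂ = ⟪x, H y⟫_ℂ)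
    (ψ : ℝ → E) (τ : ℝ)
    (hψ : HasDerivAt ψ (-(H (ψ τ) - ⟪ψ τ, H (ψ τ)⟫_ℂ • ψ τ)) τ)
    (hnorm : ‖ψ τ‖ = 1) :
    HasDerivAt (fun t => (⟪ψ t, H (ψ t)⟫_ℂ).re)
      (-2 * (‖H (ψ τ)‖ ^ 2 - ((⟪ψ τ, H (ψ τ)⟫_ℂ).re) ^ 2)) τ ∧
    -2 * (‖H (ψ τ)‖ ^ 2 - ((⟪ψ τ, H (ψ τ)⟫_ℂ).re) ^ 2) ≤ 0 := by
  have hHsymm : H.IsSymmetric := hH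
  have hHsymm' : (H.toContinuousLinearMap : E →ₗ[ℂ] E).IsSymmetric := by
    rwa [LinearMap.coe_toContinuousLinearMap]
  have hderiv := hHsymm'.hasDerivAt_re_inner_self_apply hψ
  simp only [LinearMap.coe_toContinuousLinearMap', inner_neg_right, map_neg,
    hHsymm.re_inner_apply_sub_inner_smul, RCLike.re_to_complex] at hderiv
  refine ⟨by convert hderiv using 1; ring, ?_⟩
  have hvariance := sq_re_inner_le (𝕜 := ℂ) (ψ τ) (H (ψ τ))
  rw [hnorm, one_pow, one_mul, RCLike.re_to_complex] at hvariance
  linarith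
end
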